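/- arXiv:1103.1268 — 3 statements merged into one kernel-verified Lean document; each statement's English description precedes it below -/
import Mathlib

section
/- Let a ≤ b be integers, let w be a positive integer, and let x, y be complex numbers such that none of the complex numbers y+1, x+k+1 (for a ≤ k ≤ b), and x+k−y+1 (for a ≤ k ≤ b) is a nonpositive integer, and such that x+a+i ≠ 0 for all integers 1 ≤ i ≤ b−a. Then Σ_{k=a}^{b−1} [ (x+k+1)^w · H1(x+a, k−a+1) − (x−y+k)^w · H1(x+a, k−a) ] · binom(x+k, y)^w = (y+1)^w · binom(x+b, y+1)^w · H1(x+a, b−a). -/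
/-! By the contiguity relations `(y+1) binom(z+1, y+1) = (z+1) binom(z, y)` and
`(y+1) binom(z, y+1) = (z-y) binom(z, y)`, the summand is the forward difference of
`k ↦ (y+1)^w binom(x+k, y+1)^w H1(x+a, k-a)`, so the sum telescopes; the lower boundary term
vanishes because `H1(x+a, 0) = 0`. -/

open Finset

/-- Generalized binomial coefficient via the complex Gamma function. -/
noncomputable def cbinom (u v : ℂ) : ℂ :=
  Complex.Gamma (u + 1) / (Complex.Gamma (v + 1) * Complex.Gamma (u - v + 1))

/-- Generalized harmonic number of order 1 with complex offset `c`: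
`H1 c n = ∑_{i=1}^{n} 1/(c+i)` (zero if `n ≤ 0`). -/
noncomputable def H1 (c : ℂ) (n : ℤ) : ℂ :=
  ∑ i ∈ Finset.range n.toNat, 1 / (c + (i : ℂ) + 1)

theorem Int.sum_Ico_succ_sub {M : Type*} [AddCommGroup M] (f : ℤ → M) {a b : ℤ} (hab : a ≤ b) :
    ∑ k ∈ Ico a b, (f (k + 1) - f k) = f b - f a := by
  induction b, hab using Int.leInduction with
  | base => simp
  | succ b hab ih =>
    rw [← insert_Ico_right_eq_Ico_add_one hab, sum_insert right_notMem_Ico, ih]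
    abel

lemma cbinom_of_add_one_eq_zero (z : ℂ) {y : ℂ} (hy : y + 1 = 0) : cbinom z y = 0 := by
  simp [cbinom, hy]

lemma add_one_mul_cbinom_add_one_add_one {z : ℂ} (y : ℂ) (hz : z + 1 ≠ 0) :
    (y + 1) * cbinom (z + 1) (y + 1) = (z + 1) * cbinom z y := by
  by_cases hy : y + 1 = 0
  · rw [hy, cbinom_of_add_one_eq_zero z hy, zero_mul, mul_zero]
  rw [cbinom, cbinom, Complex.Gamma_add_one _ hz, Complex.Gamma_add_one _ hy,
    show z + 1 - (y + 1) + 1 = z - y + 1 by ring]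
  field_simp

lemma add_one_mul_cbinom_add_one (z y : ℂ) :
    (y + 1) * cbinom z (y + 1) = (z - y) * cbinom z y := by
  by_cases hy : y + 1 = 0
  · rw [hy, cbinom_of_add_one_eq_zero z hy, zero_mul, mul_zero]
  by_cases hzy : z - y = 0
  · simp [cbinom, hzy, show z - (y + 1) + 1 = z - y by ring]
  rw [cbinom, cbinom, Complex.Gamma_add_one _ hy, show z - (y + 1) + 1 = z - y by ring,
    Complex.Gamma_add_one _ hzy]
  field_simp

lemma sum_Ico_cbinom_pow_mul_sub (x y : ℂ) (w : ℕ) (h : ℤ → ℂ) {a b : ℤ} (hab : a ≤ b)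
    (hx : ∀ k ∈ Ico a b, x + k + 1 ≠ 0) :
    ∑ k ∈ Ico a b, ((x + k + 1) ^ w * h (k + 1) - (x - y + k) ^ w * h k) * cbinom (x + k) y ^ w =
      (y + 1) ^ w * cbinom (x + b) (y + 1) ^ w * h b -
        (y + 1) ^ w * cbinom (x + a) (y + 1) ^ w * h a := by
  rw [← Int.sum_Ico_succ_sub (fun k : ℤ ↦ (y + 1) ^ w * cbinom (x + k) (y + 1) ^ w * h k) hab]
  refine sum_congr rfl fun k hk ↦ ?_
  have hA := add_one_mul_cbinom_add_one_add_one y (hx k hk)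
  have hB := add_one_mul_cbinom_add_one (x + k) y
  rw [Int.cast_add, Int.cast_one, ← add_assoc, ← mul_pow, ← mul_pow, hA, hB, mul_pow, mul_pow]
  ring

theorem harmonic_identity_1a_general (a b : ℤ) (hab : a ≤ b) (w : ℕ) (x y : ℂ)
    (hx1 : ∀ k : ℤ, a ≤ k → k ≤ b → ∀ m : ℕ, x + (k : ℂ) + 1 ≠ -(m : ℂ)) :
    ∑ k ∈ Finset.Ico a b,
        (((x + (k : ℂ) + 1) ^ w * H1 (x + (a : ℂ)) (k - a + 1) -
          (x - y + (k : ℂ)) ^ w * H1 (x + (a : ℂ)) (k - a)) * cbinom (x + (k : ℂ)) y ^ w) =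
    (y + 1) ^ w * cbinom (x + (b : ℂ)) (y + 1) ^ w * H1 (x + (a : ℂ)) (b - a) := by
  have hx : ∀ k ∈ Ico a b, x + k + 1 ≠ 0 := fun k hk ↦ by
    simpa using hx1 k (mem_Ico.1 hk).1 (mem_Ico.1 hk).2.le 0
  have htelescope := sum_Ico_cbinom_pow_mul_sub x y w (fun k ↦ H1 (x + a) (k - a)) hab hx
  rw [sub_self, show H1 (x + a) 0 = 0 by simp [H1], mul_zero, sub_zero] at htelescope
  simpa only [sub_add_eq_add_sub] using htelescope

theorem harmonic_identity_1a (a b : ℤ) (hab : a ≤ b) (w : ℕ) (hw : 0 < w) (x y : ℂ)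
    (hy : ∀ m : ℕ, y + 1 ≠ -(m : ℂ))
    (hx1 : ∀ k : ℤ, a ≤ k → k ≤ b → ∀ m : ℕ, x + (k : ℂ) + 1 ≠ -(m : ℂ))
    (hx2 : ∀ k : ℤ, a ≤ k → k ≤ b → ∀ m : ℕ, x + (k : ℂ) - y + 1 ≠ -(m : ℂ))
    (hh : ∀ i : ℤ, 1 ≤ i → i ≤ b - a → x + (a : ℂ) + (i : ℂ) ≠ 0) :
    ∑ k ∈ Finset.Ico a b,
        (((x + (k : ℂ) + 1) ^ w * H1 (x + (a : ℂ)) (k - a + 1) -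
          (x - y + (k : ℂ)) ^ w * H1 (x + (a : ℂ)) (k - a)) * cbinom (x + (k : ℂ)) y ^ w) =
    (y + 1) ^ w * cbinom (x + (b : ℂ)) (y + 1) ^ w * H1 (x + (a : ℂ)) (b - a) :=
  harmonic_identity_1a_general a b hab w x y hx1
end

section
/- Let a ≤ b be integers, let w be a positive integer, and let x, y be complex numbers such that x is not a nonpositive integer, none of the complex numbers y+k+1 and x−y−k+1 (for a−1 ≤ k ≤ b) is a nonpositive integer, and y−x+a−1+i ≠ 0 for all integers 1 ≤ i ≤ b−a. Then Σ_{k=a}^{b−1} [ (y−x+k)^w · H1(y−x+a−1, k−a+1) − (y+k)^w · H1(y−x+a−1, k−a) ] · (−1)^{wk} · binom(x, y+k)^w = x^w · (−1)^{wb} · binom(x−1, y+b−1)^w · H1(y−x+a−1, b−a). -/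
open Finset

/-!
The summand is the forward difference `F (k + 1) - F k` of
`F j = x^w (-1)^(wj) C(x-1, y+j-1)^w H1(c, j-a)`, `c = y-x+a-1`: this follows from the absorption identities
`x C(x-1, v) = (x-v) C(x, v)` and `x C(x-1, v-1) = v C(x, v)` (the second being the first under
the symmetry `C(u, u-v) = C(u, v)`), and it holds for any sequence in place of `H1(c, · - a)`.
So the sum telescopes to `F b - F a`, and `F a = 0` since `H1(c, 0) = 0`.
-/

theorem Int.sum_Ico_sub {M : Type*} [AddCommGroup M] (f : ℤ → M) {m n : ℤ} (hmn : m ≤ n) :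
    ∑ i ∈ Ico m n, (f (i + 1) - f i) = f n - f m := by
  induction n, hmn using Int.leInduction with
  | base => simp
  | succ n hmn ih =>
    rw [Ico_add_one_right_eq_Icc, ← Ico_insert_right hmn, sum_insert right_notMem_Ico, ih]
    abel

theorem cbinom_sub_right (u v : ℂ) : cbinom u (u - v) = cbinom u v := by
  rw [cbinom, cbinom, sub_sub_cancel, mul_comm]

theorem mul_cbinom_sub_one_left (x v : ℂ) (hx : x ≠ 0) (hxv : x - v ≠ 0) :
    x * cbinom (x - 1) v = (x - v) * cbinom x v := by
  rw [cbinom, cbinom, sub_add_cancel, show x - 1 - v + 1 = x - v by ring,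
    Complex.Gamma_add_one x hx, Complex.Gamma_add_one _ hxv,
    mul_left_comm _ (x - v), ← mul_div_assoc (x - v), mul_div_mul_left _ _ hxv, mul_div_assoc]

theorem mul_cbinom_sub_one (x v : ℂ) (hx : x ≠ 0) (hv : v ≠ 0) :
    x * cbinom (x - 1) (v - 1) = v * cbinom x v := by
  have := mul_cbinom_sub_one_left x (x - v) hx (by rwa [sub_sub_cancel])
  rwa [sub_sub_cancel, cbinom_sub_right, ← cbinom_sub_right (x - 1),
    show x - 1 - (x - v) = v - 1 by ring] at this

noncomputable def cbinomAntidiff (x y : ℂ) (w : ℕ) (h : ℤ → ℂ) (j : ℤ) : ℂ :=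
  x ^ w * (-1 : ℂ) ^ ((w : ℤ) * j) * cbinom (x - 1) (y + j - 1) ^ w * h j

theorem cbinomAntidiff_add_one_sub (x y : ℂ) (w : ℕ) (h : ℤ → ℂ) (k : ℤ) (hx : x ≠ 0)
    (hyk : y + k ≠ 0) (hxyk : x - (y + k) ≠ 0) :
    cbinomAntidiff x y w h (k + 1) - cbinomAntidiff x y w h k =
      ((y - x + k) ^ w * h (k + 1) - (y + k) ^ w * h k) *
        ((-1 : ℂ) ^ ((w : ℤ) * k) * cbinom x (y + k) ^ w) := by
  have hA : x ^ w * cbinom (x - 1) (y + k) ^ w =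
      (-1) ^ w * (y - x + k) ^ w * cbinom x (y + k) ^ w := by
    rw [← mul_pow, mul_cbinom_sub_one_left x _ hx hxyk, ← mul_pow, ← mul_pow]
    ring
  have hB : x ^ w * cbinom (x - 1) (y + k - 1) ^ w = (y + k) ^ w * cbinom x (y + k) ^ w := by
    rw [← mul_pow, mul_cbinom_sub_one x _ hx hyk, mul_pow]
  have hsign : (-1 : ℂ) ^ ((w : ℤ) * (k + 1)) = (-1) ^ ((w : ℤ) * k) * (-1) ^ w := by
    rw [mul_add, mul_one, zpow_add₀ (by norm_num), zpow_natCast]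
  have hsq : (-1 : ℂ) ^ w * (-1) ^ w = 1 := by rw [← mul_pow]; norm_num
  rw [cbinomAntidiff, cbinomAntidiff, hsign, Int.cast_add, Int.cast_one, add_sub_assoc,
    add_sub_cancel_right]
  linear_combination ((-1 : ℂ) ^ ((w : ℤ) * k) * (-1) ^ w * h (k + 1)) * hA
    - ((-1 : ℂ) ^ ((w : ℤ) * k) * h k) * hB
    + ((-1 : ℂ) ^ ((w : ℤ) * k) * h (k + 1) * (y - x + k) ^ w * cbinom x (y + k) ^ w) * hsq

theorem harmonic_identity_2a_general (a b : ℤ) (hab : a ≤ b) (w : ℕ) (x y : ℂ)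
    (hx : ∀ m : ℕ, x ≠ -(m : ℂ))
    (h1 : ∀ k : ℤ, a - 1 ≤ k → k ≤ b → ∀ m : ℕ, y + (k : ℂ) + 1 ≠ -(m : ℂ))
    (h2 : ∀ k : ℤ, a - 1 ≤ k → k ≤ b → ∀ m : ℕ, x - y - (k : ℂ) + 1 ≠ -(m : ℂ)) :
    ∑ k ∈ Finset.Ico a b,
        (((y - x + (k : ℂ)) ^ w * H1 (y - x + (a : ℂ) - 1) (k - a + 1) -
          (y + (k : ℂ)) ^ w * H1 (y - x + (a : ℂ) - 1) (k - a)) *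
          ((-1 : ℂ) ^ ((w : ℤ) * k) * cbinom x (y + (k : ℂ)) ^ w)) =
    x ^ w * (-1 : ℂ) ^ ((w : ℤ) * b) * cbinom (x - 1) (y + (b : ℂ) - 1) ^ w *
      H1 (y - x + (a : ℂ) - 1) (b - a) := by
  set h : ℤ → ℂ := fun j ↦ H1 (y - x + a - 1) (j - a)
  calc _ = ∑ k ∈ Ico a b, (cbinomAntidiff x y w h (k + 1) - cbinomAntidiff x y w h k) := by
        refine sum_congr rfl fun k hk ↦ ?_
        obtain ⟨hak, hkb⟩ := mem_Ico.mp hk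
        have hyk : y + k ≠ 0 := fun h0 ↦
          h1 (k - 1) (by omega) (by omega) 0 (by push_cast; linear_combination h0)
        have hxyk : x - (y + k) ≠ 0 := fun h0 ↦
          h2 (k + 1) (by omega) (by omega) 0 (by push_cast; linear_combination h0)
        rw [cbinomAntidiff_add_one_sub x y w h k (by simpa using hx 0) hyk hxyk,
          show k - a + 1 = k + 1 - a by ring]
    _ = cbinomAntidiff x y w h b - cbinomAntidiff x y w h a := Int.sum_Ico_sub _ hab
    _ = _ := by simp [cbinomAntidiff, h, H1]

theorem harmonic_identity_2a (a b : ℤ) (hab : a ≤ b) (w : ℕ) (hw : 0 < w) (x y : ℂ)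
    (hx : ∀ m : ℕ, x ≠ -(m : ℂ))
    (h1 : ∀ k : ℤ, a - 1 ≤ k → k ≤ b → ∀ m : ℕ, y + (k : ℂ) + 1 ≠ -(m : ℂ))
    (h2 : ∀ k : ℤ, a - 1 ≤ k → k ≤ b → ∀ m : ℕ, x - y - (k : ℂ) + 1 ≠ -(m : ℂ))
    (hh : ∀ i : ℤ, 1 ≤ i → i ≤ b - a → y - x + (a : ℂ) - 1 + (i : ℂ) ≠ 0) :
    ∑ k ∈ Finset.Ico a b,
        (((y - x + (k : ℂ)) ^ w * H1 (y - x + (a : ℂ) - 1) (k - a + 1) -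
          (y + (k : ℂ)) ^ w * H1 (y - x + (a : ℂ) - 1) (k - a)) *
          ((-1 : ℂ) ^ ((w : ℤ) * k) * cbinom x (y + (k : ℂ)) ^ w)) =
    x ^ w * (-1 : ℂ) ^ ((w : ℤ) * b) * cbinom (x - 1) (y + (b : ℂ) - 1) ^ w *
      H1 (y - x + (a : ℂ) - 1) (b - a) :=
  harmonic_identity_2a_general a b hab w x y hx h1 h2
end

section
/- Let n be a nonnegative integer and let m be a complex number that is not a negative integer. Then Σ_{k=0}^{n} binom(k, m) · H_k = binom(n+1, m+1) · ( H_{n+1} − 1/(m+1) ) + binom(0, m+1)/(m+1). -/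
/-!
With `F k = binom(k, m+1)` and `f k = binom(k, m)`, Pascal's rule `F (k+1) = f k + F k` makes the
sum a discrete integral of `F` against `H`. Summing by parts trades `H_k` for its increments
`1/(k+1)`, and the absorption identity `(m+1) F (k+1) = (k+1) f k` turns `F (k+1)/(k+1)` back
into `f k/(m+1)`, whose sum telescopes to `(F (n+1) - F 0)/(m+1)`.
-/

open Finset

section SummationByParts

variable {K : Type*} [Field K] [CharZero K]

theorem sum_range_mul_harmonic_eq (f F : ℕ → K) (c : K) (hc : c ≠ 0)
    (hpascal : ∀ k, F (k + 1) = f k + F k) (habsorb : ∀ k, c * F (k + 1) = (k + 1) * f k)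
    (n : ℕ) :
    ∑ k ∈ range (n + 1), f k * harmonic k = F (n + 1) * (harmonic (n + 1) - 1 / c) + F 0 / c := by
  induction n with
  | zero =>
    have h0 : (harmonic 1 : K) = 1 := by simp [harmonic_succ]
    rw [sum_range_one, harmonic_zero, Rat.cast_zero, mul_zero, zero_add, h0]
    field_simp
    linear_combination hpascal 0 - habsorb 0
  | succ n ih =>
    have hH : (harmonic (n + 2) : K) = harmonic (n + 1) + 1 / ((n : K) + 2) := by
      rw [harmonic_succ]; push_cast; ring
    have hn : (n : K) + 2 ≠ 0 := by exact_mod_cast (n + 1).succ_ne_zero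
    have habsorb' := habsorb (n + 1)
    rw [hpascal (n + 1)] at habsorb'
    push_cast at habsorb'
    rw [sum_range_succ, ih, hH, hpascal (n + 1)]
    field_simp
    linear_combination -habsorb'

end SummationByParts

section GeneralizedBinomial

open Complex

/-- Since Mathlib's `Γ` vanishes at its poles, `(Γ s)⁻¹` is the entire function `1/Γ`, and
`(Γ s)⁻¹ = s (Γ (s+1))⁻¹` holds for every `s`; so identities for `cbinom` need no condition on
the lower argument. -/
theorem cbinom_eq_mul_inv (u v : ℂ) :
    cbinom u v = Gamma (u + 1) * (Gamma (v + 1))⁻¹ * (Gamma (u - v + 1))⁻¹ := by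
  rw [cbinom, div_eq_mul_inv, mul_inv, mul_assoc]

theorem cbinom_add_one_add_one (u v : ℂ) (hu : u + 1 ≠ 0) :
    cbinom (u + 1) (v + 1) = cbinom u v + cbinom u (v + 1) := by
  simp only [cbinom_eq_mul_inv, Gamma_add_one _ hu, show u + 1 - (v + 1) = u - v by ring,
    show u - (v + 1) + 1 = u - v by ring, one_div_Gamma_eq_self_mul_one_div_Gamma_add_one (v + 1),
    one_div_Gamma_eq_self_mul_one_div_Gamma_add_one (u - v)]
  ring

theorem add_one_mul_cbinom_add_one_add_one_s17 (u v : ℂ) (hu : u + 1 ≠ 0) :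
    (v + 1) * cbinom (u + 1) (v + 1) = (u + 1) * cbinom u v := by
  simp only [cbinom_eq_mul_inv, Gamma_add_one _ hu, show u + 1 - (v + 1) = u - v by ring,
    one_div_Gamma_eq_self_mul_one_div_Gamma_add_one (v + 1)]
  ring

end GeneralizedBinomial

theorem harmonic_choose_identity (n : ℕ) (m : ℂ) (hm : ∀ j : ℕ, m ≠ -((j : ℂ) + 1)) :
    ∑ k ∈ Finset.range (n + 1), cbinom (k : ℂ) m * (harmonic k : ℂ) =
    cbinom ((n : ℂ) + 1) (m + 1) * ((harmonic (n + 1) : ℂ) - 1 / (m + 1)) +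
      cbinom 0 (m + 1) / (m + 1) := by
  have hm1 : m + 1 ≠ 0 := fun h => hm 0 (by simpa using eq_neg_of_add_eq_zero_left h)
  have hk (k : ℕ) : (k : ℂ) + 1 ≠ 0 := by exact_mod_cast k.succ_ne_zero
  simpa using sum_range_mul_harmonic_eq (fun k => cbinom k m) (fun k => cbinom k (m + 1)) (m + 1)
    hm1 (fun k => by push_cast; exact cbinom_add_one_add_one k m (hk k))
    (fun k => by push_cast; exact add_one_mul_cbinom_add_one_add_one_s17 k m (hk k)) n
end
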